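/- arXiv:2103.15257 — 5 statements merged into one kernel-verified Lean document; each statement's English description precedes it below -/
import Mathlib

section
/- Let G be a topological group acting continuously on a topological space X, and let g₁,…,gₙ be nonidentity elements of G. Suppose X₁⁺, X₁⁻, …, Xₙ⁺, Xₙ⁻ are nonempty, pairwise disjoint, closed subsets of X that do not cover X, and for all i we have gᵢ(X \ Xᵢ⁻) ⊆ Xᵢ⁺ and gᵢ⁻¹(X \ Xᵢ⁺) ⊆ Xᵢ⁻. Then the subgroup H = ⟨g₁,…,gₙ⟩ is discrete in G. -/
/-!
A point `x₀` outside all the ping-pong sets is moved by every nontrivial element `h` of `H`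
into one of them: writing `h` as a reduced word, induction on the word shows that `h • x₀` lies
in the set attached to its first letter. The complement of the union of the sets is an open
neighbourhood `U` of `x₀` (the sets are closed and finitely many), so for each `h ∈ H` the open
set `{k ∈ H | k • x₀ ∈ h • U}` is exactly `{h}`.
-/

open scoped Pointwise Function

namespace FreeGroup

variable {ι G X : Type*} [Group G] [MulAction G X] {g : ι → G} {S : ι × Bool → Set X}

theorem lift_mk_smul_mem_of_isReduced (hdisj : Pairwise (Disjoint on S))
    (hpp : ∀ a : ι × Bool, ∀ x ∉ S (a.1, !a.2), cond a.2 (g a.1) (g a.1)⁻¹ • x ∈ S a)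
    {x₀ : X} (hx₀ : ∀ a, x₀ ∉ S a) :
    ∀ {a : ι × Bool} {L : List (ι × Bool)}, IsReduced (a :: L) → lift g (mk (a :: L)) • x₀ ∈ S a
  | a, [], _ => by simpa [lift_mk] using hpp a x₀ (hx₀ _)
  | a, b :: L, hred => by
    rw [isReduced_cons_cons] at hred
    have hb : lift g (mk (b :: L)) • x₀ ∈ S b :=
      lift_mk_smul_mem_of_isReduced hdisj hpp hx₀ hred.2
    have hne : b ≠ (a.1, !a.2) := by
      rintro rfl
      simp at hred
    have hnot := Set.disjoint_left.1 (hdisj hne) hb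
    rw [lift_mk] at hnot ⊢
    simpa [mul_smul] using hpp a _ hnot

theorem lift_smul_mem_iUnion_of_ne_one [DecidableEq ι] (hdisj : Pairwise (Disjoint on S))
    (hpp : ∀ a : ι × Bool, ∀ x ∉ S (a.1, !a.2), cond a.2 (g a.1) (g a.1)⁻¹ • x ∈ S a)
    {x₀ : X} (hx₀ : ∀ a, x₀ ∉ S a) {w : FreeGroup ι} (hw : w ≠ 1) :
    lift g w • x₀ ∈ ⋃ a, S a := by
  obtain ⟨a, L, hL⟩ := List.exists_cons_of_ne_nil (mt toWord_eq_nil_iff.1 hw)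
  have hred : IsReduced (a :: L) := hL ▸ isReduced_toWord
  rw [← mk_toWord (x := w), hL]
  exact Set.mem_iUnion.2 ⟨a, lift_mk_smul_mem_of_isReduced hdisj hpp hx₀ hred⟩

end FreeGroup

theorem Subgroup.discreteTopology_of_smul_mem_isOpen {G X : Type*} [Group G]
    [TopologicalSpace G] [TopologicalSpace X] [MulAction G X] [ContinuousSMul G X]
    (H : Subgroup G) {x₀ : X} {U : Set X} (hU : IsOpen U) (hx₀ : x₀ ∈ U)
    (hH : ∀ h ∈ H, h • x₀ ∈ U → h = 1) : DiscreteTopology H := by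
  rw [discreteTopology_iff_isOpen_singleton]
  intro h
  have hsingleton : ({h} : Set H) = (fun k : H => (k : G) • x₀) ⁻¹' ((h : G) • U) := by
    ext k
    simp only [Set.mem_singleton_iff, Set.mem_preimage, Set.mem_smul_set_iff_inv_smul_mem,
      smul_smul]
    constructor
    · rintro rfl
      simpa using hx₀
    · intro hk
      have := hH _ (H.mul_mem (H.inv_mem h.2) k.2) hk
      exact Subtype.ext (inv_mul_eq_one.1 this).symm
  rw [hsingleton]
  exact (hU.smul _).preimage (continuous_subtype_val.smul continuous_const)

theorem ping_pong_discrete_general {G X : Type*} [Group G] [TopologicalSpace G]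
    [TopologicalSpace X] [MulAction G X] [ContinuousSMul G X]
    {n : ℕ} (g : Fin n → G)
    (Xp Xm : Fin n → Set X)
    (hclp : ∀ i, IsClosed (Xp i)) (hclm : ∀ i, IsClosed (Xm i))
    (hdisj : Pairwise (Function.onFun Disjoint
      (fun ib : Fin n × Bool => if ib.2 then Xp ib.1 else Xm ib.1)))
    (hcov : (⋃ ib : Fin n × Bool, if ib.2 then Xp ib.1 else Xm ib.1) ≠ Set.univ)
    (hpp₁ : ∀ i, ∀ x ∉ Xm i, g i • x ∈ Xp i)
    (hpp₂ : ∀ i, ∀ x ∉ Xp i, (g i)⁻¹ • x ∈ Xm i) :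
    DiscreteTopology (Subgroup.closure (Set.range g) : Subgroup G) := by
  set S : Fin n × Bool → Set X := fun ib => if ib.2 then Xp ib.1 else Xm ib.1
  obtain ⟨x₀, hx₀⟩ := Set.nonempty_compl.2 hcov
  have hclosed : IsClosed (⋃ a, S a) :=
    isClosed_iUnion_of_finite fun | (i, true) => hclp i | (i, false) => hclm i
  have hpp : ∀ a : Fin n × Bool, ∀ x ∉ S (a.1, !a.2), cond a.2 (g a.1) (g a.1)⁻¹ • x ∈ S a
    | (i, true), x, hx => hpp₁ i x hx
    | (i, false), x, hx => hpp₂ i x hx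
  refine (Subgroup.closure _).discreteTopology_of_smul_mem_isOpen hclosed.isOpen_compl hx₀ ?_
  rintro _ hh hU
  rw [← FreeGroup.range_lift_eq_closure] at hh
  obtain ⟨w, rfl⟩ := hh
  by_contra hne
  exact hU (FreeGroup.lift_smul_mem_iUnion_of_ne_one hdisj hpp
    (fun a ha => hx₀ (Set.mem_iUnion.2 ⟨a, ha⟩)) (by rintro rfl; exact hne (map_one _)))

/-- **Ping Pong Lemma (discreteness).** If a topological group `G` acts continuously
on a topological space `X`, the elements `g i` are nontrivial, and there are nonempty
pairwise disjoint *closed* subsets `Xp i`, `Xm i` which do not cover `X` and satisfy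
the ping-pong conditions, then the subgroup generated by the `g i` is discrete. -/
theorem ping_pong_discrete {G X : Type*} [Group G] [TopologicalSpace G]
    [IsTopologicalGroup G] [TopologicalSpace X] [MulAction G X] [ContinuousSMul G X]
    {n : ℕ} (g : Fin n → G) (hg : ∀ i, g i ≠ 1)
    (Xp Xm : Fin n → Set X)
    (hnep : ∀ i, (Xp i).Nonempty) (hnem : ∀ i, (Xm i).Nonempty)
    (hclp : ∀ i, IsClosed (Xp i)) (hclm : ∀ i, IsClosed (Xm i))
    (hdisj : Pairwise (Function.onFun Disjoint
      (fun ib : Fin n × Bool => if ib.2 then Xp ib.1 else Xm ib.1)))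
    (hcov : (⋃ ib : Fin n × Bool, if ib.2 then Xp ib.1 else Xm ib.1) ≠ Set.univ)
    (hpp₁ : ∀ i, ∀ x ∉ Xm i, g i • x ∈ Xp i)
    (hpp₂ : ∀ i, ∀ x ∉ Xp i, (g i)⁻¹ • x ∈ Xm i) :
    DiscreteTopology (Subgroup.closure (Set.range g) : Subgroup G) :=
  ping_pong_discrete_general g Xp Xm hclp hclm hdisj hcov hpp₁ hpp₂
end

section
/- Under the hypotheses of the ping pong lemma (nonempty pairwise disjoint subsets X₁⁺, X₁⁻, …, Xₙ⁺, Xₙ⁻ of X not covering X, with gᵢ(X \ Xᵢ⁻) ⊆ Xᵢ⁺ and gᵢ⁻¹(X \ Xᵢ⁺) ⊆ Xᵢ⁻ for all i), any nonempty reduced word w in g₁,…,gₙ sends every point x ∈ X \ (X₁⁺ ∪ X₁⁻ ∪ ⋯ ∪ Xₙ⁺ ∪ Xₙ⁻) into X₁⁺ ∪ X₁⁻ ∪ ⋯ ∪ Xₙ⁺ ∪ Xₙ⁻; in particular w acts nontrivially on X. -/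
/-!
Each letter `gᵢ^{±1}` maps everything outside the piece of the opposite sign into its own piece.
Reading a reduced word from the right, a point outside all pieces is first sent into the piece of
the last letter; since consecutive letters never cancel, each further letter finds the current
point outside its opposite piece (by disjointness) and sends it into its own piece. So `w • x`
lies in the piece of the first letter of `w`, and in particular differs from `x`.
-/

open Function

namespace FreeGroup

variable {α G X : Type*} [Group G] [MulAction G X] {g : α → G} {S : α × Bool → Set X}

lemma lift_mk_singleton_smul_mem
    (hp : ∀ i, ∀ x ∉ S (i, false), g i • x ∈ S (i, true))
    (hm : ∀ i, ∀ x ∉ S (i, true), (g i)⁻¹ • x ∈ S (i, false))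
    (a : α × Bool) {x : X} (hx : x ∉ S (a.1, !a.2)) : lift g (mk [a]) • x ∈ S a := by
  obtain ⟨i, _ | _⟩ := a
  · simpa [lift_mk] using hm i x hx
  · simpa [lift_mk] using hp i x hx

lemma lift_mk_smul_mem_of_isReduced_s2 (hS : Pairwise (Disjoint on S))
    (hp : ∀ i, ∀ x ∉ S (i, false), g i • x ∈ S (i, true))
    (hm : ∀ i, ∀ x ∉ S (i, true), (g i)⁻¹ • x ∈ S (i, false))
    {x : X} (hx : x ∉ ⋃ c, S c) {a : α × Bool} {L : List (α × Bool)}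
    (hL : IsReduced (a :: L)) : lift g (mk (a :: L)) • x ∈ S a := by
  induction L generalizing a with
  | nil => exact lift_mk_singleton_smul_mem hp hm a fun h => hx (Set.mem_iUnion_of_mem _ h)
  | cons b L ih =>
    obtain ⟨hab, hbL⟩ := isReduced_cons_cons.mp hL
    have hy : lift g (mk (b :: L)) • x ∈ S b := ih hbL
    have hb : b ≠ (a.1, !a.2) := by
      rintro rfl
      simp at hab
    have hsplit : mk (a :: b :: L) = mk [a] * mk (b :: L) := by rw [mul_mk]; rfl
    rw [hsplit, _root_.map_mul, mul_smul]
    exact lift_mk_singleton_smul_mem hp hm a (Set.disjoint_left.mp (hS hb) hy)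

lemma lift_smul_mem_iUnion_of_ne_one_s2 [DecidableEq α] (hS : Pairwise (Disjoint on S))
    (hp : ∀ i, ∀ x ∉ S (i, false), g i • x ∈ S (i, true))
    (hm : ∀ i, ∀ x ∉ S (i, true), (g i)⁻¹ • x ∈ S (i, false))
    {w : FreeGroup α} (hw : w ≠ 1) {x : X} (hx : x ∉ ⋃ c, S c) : lift g w • x ∈ ⋃ c, S c := by
  obtain ⟨a, L, hwL⟩ := List.exists_cons_of_ne_nil (mt toWord_eq_nil_iff.mp hw)
  have hred : IsReduced (a :: L) := hwL ▸ isReduced_toWord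
  rw [← mk_toWord (x := w), hwL]
  exact Set.mem_iUnion_of_mem a (lift_mk_smul_mem_of_isReduced_s2 hS hp hm hx hred)

end FreeGroup

theorem ping_pong_word_general {G X : Type*} [Group G] [MulAction G X] {n : ℕ}
    (g : Fin n → G)
    (Xp Xm : Fin n → Set X)
    (hdisj : Pairwise (Function.onFun Disjoint
      (fun ib : Fin n × Bool => if ib.2 then Xp ib.1 else Xm ib.1)))
    (hpp₁ : ∀ i, ∀ x ∉ Xm i, g i • x ∈ Xp i)
    (hpp₂ : ∀ i, ∀ x ∉ Xp i, (g i)⁻¹ • x ∈ Xm i)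
    (w : FreeGroup (Fin n)) (hw : w ≠ 1)
    (x : X) (hx : x ∉ ⋃ ib : Fin n × Bool, if ib.2 then Xp ib.1 else Xm ib.1) :
    (FreeGroup.lift g w) • x ∈ (⋃ ib : Fin n × Bool, if ib.2 then Xp ib.1 else Xm ib.1)
      ∧ (FreeGroup.lift g w) • x ≠ x := by
  have hmem := FreeGroup.lift_smul_mem_iUnion_of_ne_one_s2 hdisj hpp₁ hpp₂ hw hx
  exact ⟨hmem, fun hfix => hx (hfix ▸ hmem)⟩

/-- **Ping Pong Lemma (key step).** Under the ping-pong hypotheses, every nontrivial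
reduced word `w` in the generators (i.e. every nontrivial element of the free group,
mapped into `G` by the canonical lift) sends each point outside
`Y = ⋃ᵢ (Xp i ∪ Xm i)` into `Y`; in particular `w` acts nontrivially on `X`. -/
theorem ping_pong_word {G X : Type*} [Group G] [MulAction G X] {n : ℕ}
    (g : Fin n → G) (hg : ∀ i, g i ≠ 1)
    (Xp Xm : Fin n → Set X)
    (hnep : ∀ i, (Xp i).Nonempty) (hnem : ∀ i, (Xm i).Nonempty)
    (hdisj : Pairwise (Function.onFun Disjoint
      (fun ib : Fin n × Bool => if ib.2 then Xp ib.1 else Xm ib.1)))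
    (hcov : (⋃ ib : Fin n × Bool, if ib.2 then Xp ib.1 else Xm ib.1) ≠ Set.univ)
    (hpp₁ : ∀ i, ∀ x ∉ Xm i, g i • x ∈ Xp i)
    (hpp₂ : ∀ i, ∀ x ∉ Xp i, (g i)⁻¹ • x ∈ Xm i)
    (w : FreeGroup (Fin n)) (hw : w ≠ 1)
    (x : X) (hx : x ∉ ⋃ ib : Fin n × Bool, if ib.2 then Xp ib.1 else Xm ib.1) :
    (FreeGroup.lift g w) • x ∈ (⋃ ib : Fin n × Bool, if ib.2 then Xp ib.1 else Xm ib.1)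
      ∧ (FreeGroup.lift g w) • x ≠ x :=
  ping_pong_word_general g Xp Xm hdisj hpp₁ hpp₂ w hw x hx
end

section
/- Let T be a metric tree (a 0-hyperbolic geodesic space, which is CAT(0)) and let g₁,…,gₙ be hyperbolic isometries of T with pairwise distinct axes A₁,…,Aₙ such that each pairwise intersection Aᵢ ∩ Aⱼ is a single point or a bounded segment, and for each i the union of the projections of the other axes onto Aᵢ is contained in an open segment of Aᵢ of length equal to the translation length of gᵢ. Then ⟨g₁,…,gₙ⟩ is free of rank n. -/
open Real Filter Set

variable {X : Type*} [MetricSpace X]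

/-- `γ` restricted to `[a,b]` is a unit-speed geodesic segment. -/
def IsGeodSeg {X : Type*} [MetricSpace X] (γ : ℝ → X) (a b : ℝ) : Prop :=
  ∀ s ∈ Set.Icc a b, ∀ t ∈ Set.Icc a b, dist (γ s) (γ t) = |s - t|

/-- Every pair of points is joined by a geodesic segment. -/
def GeodesicSpace (X : Type*) [MetricSpace X] : Prop :=
  ∀ x y : X, ∃ γ : ℝ → X, γ 0 = x ∧ γ (dist x y) = y ∧ IsGeodSeg γ 0 (dist x y)

/-- `X` is CAT(0): it is geodesic and satisfies the (equivalent) convexity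
form of the comparison inequality along every geodesic segment. -/
def CAT0 (X : Type*) [MetricSpace X] : Prop :=
  GeodesicSpace X ∧
  ∀ (x : X) (γ : ℝ → X) (a b : ℝ), IsGeodSeg γ a b →
    ∀ t ∈ Set.Icc (0:ℝ) 1,
      dist x (γ (a + t * (b - a))) ^ 2 ≤
        (1 - t) * dist x (γ a) ^ 2 + t * dist x (γ b) ^ 2
          - t * (1 - t) * dist (γ a) (γ b) ^ 2

/-- Euclidean comparison angle at `p` in the comparison triangle of `(p, x, q)`. -/
noncomputable def compAngle {X : Type*} [MetricSpace X] (p x q : X) : ℝ :=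
  Real.arccos ((dist p x ^ 2 + dist p q ^ 2 - dist x q ^ 2) / (2 * dist p x * dist p q))

/-- The Alexandrov (upper) angle at `γ₁ 0 = γ₂ 0` between the geodesics `γ₁` and `γ₂`. -/
noncomputable def alexAngle {X : Type*} [MetricSpace X] (γ₁ γ₂ : ℝ → X) : ℝ :=
  Filter.limsup (fun st : ℝ × ℝ => compAngle (γ₁ 0) (γ₁ st.1) (γ₂ st.2))
    ((nhdsWithin 0 (Set.Ioi 0)) ×ˢ (nhdsWithin 0 (Set.Ioi 0)))

/-- `p` is the nearest-point projection onto `A`. -/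
def IsNearestPtProj {X : Type*} [MetricSpace X] (A : Set X) (p : X → X) : Prop :=
  ∀ x, p x ∈ A ∧ ∀ a ∈ A, dist x (p x) ≤ dist x a

/-- `A` is geodesically convex. -/
def GeodConvex {X : Type*} [MetricSpace X] (A : Set X) : Prop :=
  ∀ (γ : ℝ → X) (a b : ℝ), IsGeodSeg γ a b → γ a ∈ A → γ b ∈ A →
    ∀ t ∈ Set.Icc a b, γ t ∈ A

/-- `γ` is an axis of the hyperbolic isometry `g` with translation length `ℓ > 0`:
`γ` is a geodesic line, invariant under `g`, on which `g` translates by `ℓ`. -/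
def IsAxisOf {X : Type*} [MetricSpace X] (g : X ≃ᵢ X) (γ : ℝ → X) (ℓ : ℝ) : Prop :=
  Isometry γ ∧ (∀ t : ℝ, g (γ t) = γ (t + ℓ)) ∧ 0 < ℓ


/-- `X` is 0-hyperbolic (four-point condition). -/
def ZeroHyperbolic (X : Type*) [MetricSpace X] : Prop :=
  ∀ x y z w : X,
    dist x y + dist z w ≤ max (dist x z + dist y w) (dist x w + dist y z)

/-- `X` is a metric (ℝ-)tree: a geodesic, 0-hyperbolic metric space. -/
def IsRTree (X : Type*) [MetricSpace X] : Prop :=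
  GeodesicSpace X ∧ ZeroHyperbolic X

/-!
Ping-pong. Let `Dᵢ` be the open fundamental segment of the axis `Aᵢ` containing the projections
of the other axes, and let `X⁺ᵢ`, `X⁻ᵢ` be the points whose projection to `Aᵢ` lies beyond `Dᵢ`
in the positive, resp. negative, direction. In a tree, if a point projects to `Aᵢ` outside `Dᵢ`,
its projection to `Aⱼ` factors through `Aᵢ` and therefore lies in `Dⱼ`; hence all these sets are
pairwise disjoint. Projection to `Aᵢ` commutes with `gᵢ`, so `gᵢ` maps the complement of `X⁻ᵢ`
into `X⁺ᵢ` and `gᵢ⁻¹` maps the complement of `X⁺ᵢ` into `X⁻ᵢ`. For a single generator, freeness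
is the infinite order of a translation along an axis.
-/

open Set Function
open scoped Pointwise

instance IsometryEquiv.applyMulAction (X : Type*) [PseudoMetricSpace X] :
    MulAction (X ≃ᵢ X) X where
  smul e x := e x
  one_smul _ := rfl
  mul_smul _ _ _ := rfl

theorem FreeGroup.injective_lift_of_unique {ι G : Type*} [Unique ι] [Group G] {a : ι → G}
    (ha : ¬IsOfFinOrder (a default)) : Injective (FreeGroup.lift a) := by
  have hlift : ∀ w, FreeGroup.lift a w = a default ^ FreeGroup.equivIntOfUnique w := by
    intro w
    conv_lhs => rw [← FreeGroup.equivIntOfUnique.symm_apply_apply w]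
    exact (map_zpow _ _ _).trans (by rw [FreeGroup.lift_apply_of])
  intro w w' h
  rw [hlift, hlift] at h
  exact FreeGroup.equivIntOfUnique.injective (injective_zpow_iff_not_isOfFinOrder.mpr ha h)

universe u v

/-- `FreeGroup.injective_lift_of_ping_pong` with `ι` and `G` in independent universes. -/
theorem FreeGroup.injective_lift_of_ping_pong' {ι : Type u} {G : Type v} {α : Type*}
    [Nontrivial ι] [Group G] [MulAction G α] (a : ι → G) (X Y : ι → Set α)
    (hXnonempty : ∀ i, (X i).Nonempty) (hXdisj : Pairwise (Disjoint on X))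
    (hYdisj : Pairwise (Disjoint on Y)) (hXYdisj : ∀ i j, Disjoint (X i) (Y j))
    (hX : ∀ i, a i • (Y i)ᶜ ⊆ X i) (hY : ∀ i, a⁻¹ i • (X i)ᶜ ⊆ Y i) :
    Injective (FreeGroup.lift a) := by
  let a' : ULift.{v} ι → ULift.{u} G := fun i => ULift.up (a i.down)
  let _ : MulAction (ULift.{u} G) α := MulAction.compHom α MulEquiv.ulift.toMonoidHom
  have hdown : ∀ {i j : ULift.{v} ι}, i ≠ j → i.down ≠ j.down := fun hij h => hij (ULift.ext _ _ h)
  have hinj : Injective (FreeGroup.lift a') :=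
    FreeGroup.injective_lift_of_ping_pong a' (fun i => X i.down) (fun i => Y i.down)
      (fun i => hXnonempty i.down) (fun _ _ hij => hXdisj (hdown hij))
      (fun _ _ hij => hYdisj (hdown hij)) (fun i j => hXYdisj i.down j.down)
      (fun i => hX i.down) (fun i => hY i.down)
  have hcomp : FreeGroup.lift a = MulEquiv.ulift.toMonoidHom.comp
      ((FreeGroup.lift a').comp (FreeGroup.freeGroupCongr Equiv.ulift.symm).toMonoidHom) :=
    FreeGroup.ext_hom _ _ fun i => by simp [a']; rfl
  rw [hcomp]
  exact MulEquiv.ulift.injective.comp (hinj.comp (MulEquiv.injective _))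

theorem IsNearestPtProj.apply_eq_self {A : Set X} {p : X → X} (hp : IsNearestPtProj A p)
    {x : X} (hx : x ∈ A) : p x = x := by
  simpa [dist_comm x] using (hp x).2 x hx

theorem Isometry.exists_mem_range_dist_eq {γ : ℝ → X} (hγ : Isometry γ) {x z : X}
    (hx : x ∈ range γ) (hz : z ∈ range γ) {α : ℝ} (h0 : 0 ≤ α) (hα : α ≤ dist x z) :
    ∃ c ∈ range γ, dist x c = α ∧ dist c z = dist x z - α := by
  obtain ⟨⟨s, rfl⟩, ⟨t, rfl⟩⟩ := And.intro hx hz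
  simp only [hγ.dist_eq, Real.dist_eq] at hα ⊢
  rcases le_total s t with h | h
  · rw [abs_of_nonpos (by linarith)] at hα ⊢
    refine ⟨γ (s + α), mem_range_self _, ?_, ?_⟩ <;>
      rw [hγ.dist_eq, Real.dist_eq, abs_of_nonpos (by linarith)] <;> ring
  · rw [abs_of_nonneg (by linarith)] at hα ⊢
    refine ⟨γ (s - α), mem_range_self _, ?_, ?_⟩ <;>
      rw [hγ.dist_eq, Real.dist_eq, abs_of_nonneg (by linarith)] <;> ring

namespace ZeroHyperbolic

theorem dist_proj_add_dist_eq (hZ : ZeroHyperbolic X) {γ : ℝ → X} {p : X → X} (hγ : Isometry γ)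
    (hp : IsNearestPtProj (range γ) p) (y : X) {z : X} (hz : z ∈ range γ) :
    dist y (p y) + dist (p y) z = dist y z := by
  obtain ⟨hpy, hmin⟩ := hp y
  -- `α` is the Gromov product `(y | z)_{p y}`; the point `c` at distance `α` from `p y` towards
  -- `z` would be strictly closer to `y` than `p y` unless `α = 0`.
  set α := (dist y (p y) + dist (p y) z - dist y z) / 2 with hα
  have hyz := dist_triangle y (p y) z
  have hy := dist_triangle y z (p y)
  obtain ⟨c, hc, hpc, hcz⟩ := hγ.exists_mem_range_dist_eq hpy hz (α := α)
    (by linarith) (by rw [dist_comm z] at hy; linarith)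
  have h4 := hZ y c (p y) z
  have hyc := hmin c hc
  rw [dist_comm c (p y)] at h4
  rcases le_max_iff.mp h4 with h | h <;> linarith

theorem proj_eq_of_dist_le (hZ : ZeroHyperbolic X) {γ : ℝ → X} {p : X → X} (hγ : Isometry γ)
    (hp : IsNearestPtProj (range γ) p) {y q : X} (hq : q ∈ range γ)
    (h : dist y q ≤ dist y (p y)) : p y = q :=
  dist_eq_zero.mp <|
    le_antisymm (by linarith [hZ.dist_proj_add_dist_eq hγ hp y hq]) dist_nonneg

theorem proj_apply_isometryEquiv (hZ : ZeroHyperbolic X) {γ : ℝ → X} {p : X → X}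
    (hγ : Isometry γ) (hp : IsNearestPtProj (range γ) p) {e : X ≃ᵢ X}
    (he : MapsTo e (range γ) (range γ)) (he' : MapsTo e.symm (range γ) (range γ)) (x : X) :
    p (e x) = e (p x) :=
  hZ.proj_eq_of_dist_le hγ hp (he (hp x).1) <|
    calc dist (e x) (e (p x)) = dist x (p x) := e.dist_eq _ _
      _ ≤ dist x (e.symm (p (e x))) := (hp x).2 _ (he' (hp (e x)).1)
      _ = dist (e x) (p (e x)) := by rw [← e.dist_eq, e.apply_symm_apply]

theorem dist_add_dist_eq_or_dist_add_dist_eq (hZ : ZeroHyperbolic X) {y q z : X}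
    (h : dist y q + dist q z = dist y z) (r : X) :
    dist y q + dist q r = dist y r ∨ dist r q + dist q z = dist r z := by
  have h4 := hZ y z r q
  have hyr := dist_triangle y q r
  have hrz := dist_triangle r q z
  rw [dist_comm z q, dist_comm z r, dist_comm r q] at *
  rcases le_max_iff.mp h4 with h' | h'
  · left; linarith
  · right; linarith

theorem proj_eq_proj_proj_of_not_mem (hZ : ZeroHyperbolic X) {γ γ' : ℝ → X} {p p' : X → X}
    (hγ : Isometry γ) (hγ' : Isometry γ') (hp : IsNearestPtProj (range γ) p)
    (hp' : IsNearestPtProj (range γ') p') {y : X} (hy : p' y ∉ p' '' range γ) :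
    p y = p (p' y) := by
  rcases hZ.dist_add_dist_eq_or_dist_add_dist_eq
      (hZ.dist_proj_add_dist_eq hγ' hp' y (hp' (p y)).1) (p y) with h | h
  · refine hZ.proj_eq_of_dist_le hγ hp (hp (p' y)).1 ?_
    calc dist y (p (p' y)) ≤ dist y (p' y) + dist (p' y) (p (p' y)) := dist_triangle _ _ _
      _ ≤ dist y (p' y) + dist (p' y) (p y) := by gcongr; exact (hp _).2 _ (hp y).1
      _ = dist y (p y) := h
  · refine absurd ⟨p y, (hp y).1, hZ.proj_eq_of_dist_le hγ' hp' (hp' y).1 ?_⟩ hy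
    linarith [dist_nonneg (x := p' y) (y := p' (p y))]

theorem disjoint_preimage_compl (hZ : ZeroHyperbolic X) {γ γ' : ℝ → X} {p p' : X → X}
    (hγ : Isometry γ) (hγ' : Isometry γ') (hp : IsNearestPtProj (range γ) p)
    (hp' : IsNearestPtProj (range γ') p') {D D' : Set X} (hD : p '' range γ' ⊆ D)
    (hD' : p' '' range γ ⊆ D') : Disjoint (p ⁻¹' Dᶜ) (p' ⁻¹' D'ᶜ) := by
  refine disjoint_left.mpr fun x hx hx' => hx ?_
  rw [hZ.proj_eq_proj_proj_of_not_mem hγ hγ' hp hp' fun h => hx' (hD' h)]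
  exact hD (mem_image_of_mem _ (hp' x).1)

end ZeroHyperbolic

namespace IsAxisOf

variable {g : X ≃ᵢ X} {γ : ℝ → X} {ℓ : ℝ}

theorem symm_apply (h : IsAxisOf g γ ℓ) (t : ℝ) : g.symm (γ t) = γ (t - ℓ) :=
  g.symm_apply_eq.mpr (by rw [h.2.1, sub_add_cancel])

theorem pow_apply (h : IsAxisOf g γ ℓ) (m : ℕ) (t : ℝ) : (g ^ m) (γ t) = γ (t + m * ℓ) := by
  induction m with
  | zero => simp
  | succ m ih => rw [pow_succ', IsometryEquiv.mul_apply, ih, h.2.1]; push_cast; ring_nf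

theorem not_isOfFinOrder (h : IsAxisOf g γ ℓ) : ¬IsOfFinOrder g := by
  rintro ⟨m, hm, hgm⟩
  have hfix : γ (0 + m * ℓ) = γ 0 := by
    rw [← h.pow_apply, (isPeriodicPt_mul_iff_pow_eq_one g).mp hgm, IsometryEquiv.coe_one, id]
  have := h.1.injective hfix
  have : (0 : ℝ) < m * ℓ := mul_pos (by exact_mod_cast hm) h.2.2
  linarith

theorem proj_apply (hZ : ZeroHyperbolic X) (h : IsAxisOf g γ ℓ) {p : X → X}
    (hp : IsNearestPtProj (range γ) p) (x : X) : p (g x) = g (p x) :=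
  hZ.proj_apply_isometryEquiv h.1 hp (by rintro _ ⟨t, rfl⟩; exact ⟨t + ℓ, (h.2.1 t).symm⟩)
    (by rintro _ ⟨t, rfl⟩; exact ⟨t - ℓ, (h.symm_apply t).symm⟩) x

theorem proj_symm_apply (hZ : ZeroHyperbolic X) (h : IsAxisOf g γ ℓ) {p : X → X}
    (hp : IsNearestPtProj (range γ) p) (x : X) : p (g.symm x) = g.symm (p x) :=
  hZ.proj_apply_isometryEquiv h.1 hp (by rintro _ ⟨t, rfl⟩; exact ⟨t - ℓ, (h.symm_apply t).symm⟩)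
    (by rintro _ ⟨t, rfl⟩; exact ⟨t + ℓ, by rw [g.symm_symm, h.2.1]⟩) x

theorem smul_compl_subset (hZ : ZeroHyperbolic X) (h : IsAxisOf g γ ℓ) {p : X → X}
    (hp : IsNearestPtProj (range γ) p) (a : ℝ) :
    g • (p ⁻¹' (γ '' Iio a))ᶜ ⊆ p ⁻¹' (γ '' Ici (a + ℓ)) := by
  rintro _ ⟨x, hx, rfl⟩
  obtain ⟨t, ht⟩ := (hp x).1
  have hat : a ≤ t := not_lt.mp fun hta => hx ⟨t, hta, ht⟩
  show p (g x) ∈ γ '' Ici (a + ℓ)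
  rw [h.proj_apply hZ hp, ← ht, h.2.1]
  exact mem_image_of_mem _ (add_le_add_left hat ℓ)

theorem inv_smul_compl_subset (hZ : ZeroHyperbolic X) (h : IsAxisOf g γ ℓ) {p : X → X}
    (hp : IsNearestPtProj (range γ) p) (a : ℝ) :
    g⁻¹ • (p ⁻¹' (γ '' Ici (a + ℓ)))ᶜ ⊆ p ⁻¹' (γ '' Iio a) := by
  rintro _ ⟨x, hx, rfl⟩
  obtain ⟨t, ht⟩ := (hp x).1
  have hta : t < a + ℓ := not_le.mp fun hta => hx ⟨t, hta, ht⟩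
  show p (g.symm x) ∈ γ '' Iio a
  rw [h.proj_symm_apply hZ hp, ← ht, h.symm_apply]
  exact mem_image_of_mem _ (sub_lt_iff_lt_add.mpr hta)

end IsAxisOf

namespace ZeroHyperbolic

variable {ι : Type*} {g : ι → X ≃ᵢ X} {γ : ι → ℝ → X} {ℓ : ι → ℝ} {p : ι → X → X}

theorem injective_lift_of_axes_of_nontrivial [Nontrivial ι] (hZ : ZeroHyperbolic X)
    (hax : ∀ i, IsAxisOf (g i) (γ i) (ℓ i)) (hp : ∀ i, IsNearestPtProj (range (γ i)) (p i))
    (a : ι → ℝ) (hD : ∀ i j, j ≠ i → p i '' range (γ j) ⊆ γ i '' Ioo (a i) (a i + ℓ i)) :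
    Injective (FreeGroup.lift g) := by
  set D := fun i => γ i '' Ioo (a i) (a i + ℓ i)
  set Xpos := fun i => p i ⁻¹' (γ i '' Ici (a i + ℓ i))
  set Xneg := fun i => p i ⁻¹' (γ i '' Iio (a i))
  have hcross : ∀ i j, i ≠ j → Disjoint (p i ⁻¹' (D i)ᶜ) (p j ⁻¹' (D j)ᶜ) := fun i j hij =>
    hZ.disjoint_preimage_compl (hax i).1 (hax j).1 (hp i) (hp j) (hD i j hij.symm) (hD j i hij)
  have hpos : ∀ i, Xpos i ⊆ p i ⁻¹' (D i)ᶜ := fun i =>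
    preimage_mono <| subset_compl_iff_disjoint_right.mpr <|
      (disjoint_image_iff (hax i).1.injective).mpr <|
        disjoint_left.mpr fun _ h h' => h'.2.not_ge h
  have hneg : ∀ i, Xneg i ⊆ p i ⁻¹' (D i)ᶜ := fun i =>
    preimage_mono <| subset_compl_iff_disjoint_right.mpr <|
      (disjoint_image_iff (hax i).1.injective).mpr <|
        disjoint_left.mpr fun _ h h' => h'.1.not_gt h
  refine FreeGroup.injective_lift_of_ping_pong' g Xpos Xneg (fun i => ?_)
    (fun i j hij => (hcross i j hij).mono (hpos i) (hpos j))
    (fun i j hij => (hcross i j hij).mono (hneg i) (hneg j)) (fun i j => ?_)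
    (fun i => (hax i).smul_compl_subset hZ (hp i) (a i))
    (fun i => (hax i).inv_smul_compl_subset hZ (hp i) (a i))
  · refine ⟨γ i (a i + ℓ i), ?_⟩
    rw [mem_preimage, (hp i).apply_eq_self (mem_range_self _)]
    exact mem_image_of_mem _ self_mem_Ici
  · rcases eq_or_ne i j with rfl | hij
    · exact Disjoint.preimage _ <| (disjoint_image_iff (hax i).1.injective).mpr <|
        disjoint_left.mpr fun _ h h' => (hax i).2.2.not_ge (by simp_all; linarith)
    · exact (hcross i j hij).mono (hpos i) (hneg j)

theorem injective_lift_of_axes (hZ : ZeroHyperbolic X)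
    (hax : ∀ i, IsAxisOf (g i) (γ i) (ℓ i)) (hp : ∀ i, IsNearestPtProj (range (γ i)) (p i))
    (hD : ∀ i, ∃ a : ℝ, ∀ j, j ≠ i → p i '' range (γ j) ⊆ γ i '' Ioo a (a + ℓ i)) :
    Injective (FreeGroup.lift g) := by
  rcases subsingleton_or_nontrivial ι with hι | hι
  · rcases isEmpty_or_nonempty ι with _ | ⟨⟨i⟩⟩
    · exact injective_of_subsingleton _
    · have : Unique ι := uniqueOfSubsingleton i
      exact FreeGroup.injective_lift_of_unique (hax default).not_isOfFinOrder
  · choose a ha using hD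
    exact hZ.injective_lift_of_axes_of_nontrivial hax hp a ha

end ZeroHyperbolic

theorem tree_schottky_free_general {X : Type*} [MetricSpace X] (hX : IsRTree X)
    {n : ℕ} (g : Fin n → X ≃ᵢ X)
    (γ : Fin n → ℝ → X) (ℓ : Fin n → ℝ)
    (hax : ∀ i, IsAxisOf (g i) (γ i) (ℓ i))
    (p : Fin n → X → X) (hp : ∀ i, IsNearestPtProj (Set.range (γ i)) (p i))
    (hD : ∀ i : Fin n, ∃ a : ℝ, ∀ j : Fin n, j ≠ i →
      p i '' Set.range (γ j) ⊆ γ i '' Set.Ioo a (a + ℓ i)) :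
    Function.Injective (FreeGroup.lift g : FreeGroup (Fin n) →* (X ≃ᵢ X)) :=
  hX.2.injective_lift_of_axes hax hp hD

/-- **Schottky lemma for trees.** Hyperbolic isometries of a metric tree with pairwise
distinct axes, whose pairwise intersections are points or bounded segments, and whose
projections onto each axis lie in an open fundamental segment, generate a free group of
rank `n`. -/
theorem tree_schottky_free {X : Type*} [MetricSpace X] (hX : IsRTree X)
    {n : ℕ} (g : Fin n → X ≃ᵢ X)
    (γ : Fin n → ℝ → X) (ℓ : Fin n → ℝ)
    (hax : ∀ i, IsAxisOf (g i) (γ i) (ℓ i))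
    (hdistinct : ∀ i j : Fin n, i ≠ j → Set.range (γ i) ≠ Set.range (γ j))
    (hint : ∀ i j : Fin n, i ≠ j → ∃ a b : ℝ, a ≤ b ∧
      Set.range (γ i) ∩ Set.range (γ j) = γ i '' Set.Icc a b)
    (p : Fin n → X → X) (hp : ∀ i, IsNearestPtProj (Set.range (γ i)) (p i))
    (hD : ∀ i : Fin n, ∃ a : ℝ, ∀ j : Fin n, j ≠ i →
      p i '' Set.range (γ j) ⊆ γ i '' Set.Ioo a (a + ℓ i)) :
    Function.Injective (FreeGroup.lift g : FreeGroup (Fin n) →* (X ≃ᵢ X)) :=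
  tree_schottky_free_general hX g γ ℓ hax p hp hD
end

section
/- The matrices A = [[1,2],[0,1]] and B = [[1,0],[2,1]] generate a free subgroup of rank 2 in SL₂(ℤ). -/
/-!
Ping-pong on the nonzero vectors of `R²`, for any strictly ordered commutative ring `R`.
In terms of the slope `t = x / y` of `(x, y)`, `A` acts by `t ↦ t + 2` and `B` by
`t ↦ t / (2t + 1)`, i.e. `1/t ↦ 1/t + 2`. Hence `A` maps the complement of `(-∞, -1)`
into `[1, ∞]` and `A⁻¹` maps the complement of `[1, ∞]` into `(-∞, -1)`, while `B` maps the
complement of `[-1, 0)` into `[0, 1)` and `B⁻¹` maps the complement of `[0, 1)` into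
`[-1, 0)`. These four slope regions are pairwise disjoint, so the ping-pong lemma applies.
The regions are written below without division, through the sign of `x * y` and the
comparison of `x ^ 2` with `y ^ 2`.
-/

open Function Matrix MatrixGroups Pointwise

def nonzeroVectors (G M : Type*) [Group G] [AddMonoid M] [DistribMulAction G M] :
    SubMulAction G M where
  carrier := {v | v ≠ 0}
  smul_mem' g _ hv := (smul_ne_zero_iff_ne g).mpr hv

@[simp]
theorem mem_nonzeroVectors {G M : Type*} [Group G] [AddMonoid M] [DistribMulAction G M] {v : M} :
    v ∈ nonzeroVectors G M ↔ v ≠ 0 :=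
  Iff.rfl

namespace Sanov

section Shears

variable {R : Type*} [CommRing R] [LinearOrder R] [IsStrictOrderedRing R] {x y : R}

theorem upperShear_mapsTo (h : 0 ≤ x * y ∨ x ^ 2 ≤ y ^ 2) :
    0 ≤ (x + 2 * y) * y ∧ y ^ 2 ≤ (x + 2 * y) ^ 2 := by
  rcases h with h | h <;> constructor <;> nlinarith [sq_nonneg (x + y), sq_nonneg y]

theorem upperShear_inv_mapsTo (h : x * y < 0 ∨ x ^ 2 < y ^ 2) :
    (x - 2 * y) * y < 0 ∧ y ^ 2 < (x - 2 * y) ^ 2 := by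
  rcases h with h | h <;> constructor <;> nlinarith [sq_nonneg (x - y), sq_nonneg y]

theorem lowerShear_mapsTo (h₀ : x ≠ 0 ∨ y ≠ 0) (h : 0 ≤ x * y ∨ y ^ 2 < x ^ 2) :
    0 ≤ x * (2 * x + y) ∧ x ^ 2 < (2 * x + y) ^ 2 := by
  have : 0 < x ^ 2 + y ^ 2 := by rcases h₀ with h₀ | h₀ <;> positivity
  rcases h with h | h <;> constructor <;> nlinarith [sq_nonneg (x + y), sq_nonneg x]

theorem lowerShear_inv_mapsTo (h₀ : x ≠ 0 ∨ y ≠ 0) (h : x * y < 0 ∨ y ^ 2 ≤ x ^ 2) :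
    x * (y - 2 * x) < 0 ∧ x ^ 2 ≤ (y - 2 * x) ^ 2 := by
  have : 0 < x ^ 2 + y ^ 2 := by rcases h₀ with h₀ | h₀ <;> positivity
  rcases h with h | h <;> constructor <;> nlinarith [sq_nonneg (x - y), sq_nonneg x]

end Shears

section Generators

variable {R : Type*} [CommRing R]

variable (R) in
def generator (b : Bool) : SL(2, R) :=
  if b then ⟨!![1, 2; 0, 1], by simp [det_fin_two]⟩
  else ⟨!![1, 0; 2, 1], by simp [det_fin_two]⟩

theorem coe_generator_true : (generator R true : Matrix (Fin 2) (Fin 2) R) = !![1, 2; 0, 1] :=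
  rfl

theorem coe_generator_false : (generator R false : Matrix (Fin 2) (Fin 2) R) = !![1, 0; 2, 1] :=
  rfl

theorem generator_true_smul (v : Fin 2 → R) :
    generator R true • v = ![v 0 + 2 * v 1, v 1] := by
  rw [Matrix.SpecialLinearGroup.smul_def, coe_generator_true]
  ext i; fin_cases i <;> simp [mulVec, dotProduct, Fin.sum_univ_two]

theorem generator_true_inv_smul (v : Fin 2 → R) :
    (generator R true)⁻¹ • v = ![v 0 - 2 * v 1, v 1] := by
  rw [Matrix.SpecialLinearGroup.smul_def, Matrix.SpecialLinearGroup.coe_inv, coe_generator_true]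
  ext i; fin_cases i <;> simp [adjugate_fin_two, mulVec, dotProduct, Fin.sum_univ_two]; ring

theorem generator_false_smul (v : Fin 2 → R) :
    generator R false • v = ![v 0, 2 * v 0 + v 1] := by
  rw [Matrix.SpecialLinearGroup.smul_def, coe_generator_false]
  ext i; fin_cases i <;> simp [mulVec, dotProduct, Fin.sum_univ_two]

theorem generator_false_inv_smul (v : Fin 2 → R) :
    (generator R false)⁻¹ • v = ![v 0, v 1 - 2 * v 0] := by
  rw [Matrix.SpecialLinearGroup.smul_def, Matrix.SpecialLinearGroup.coe_inv, coe_generator_false]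
  ext i; fin_cases i <;> simp [adjugate_fin_two, mulVec, dotProduct, Fin.sum_univ_two]; ring

theorem coord_ne_zero (v : nonzeroVectors SL(2, R) (Fin 2 → R)) :
    v.1 0 ≠ 0 ∨ v.1 1 ≠ 0 := by
  simpa [ne_iff, Fin.exists_fin_two] using mem_nonzeroVectors.1 v.2

end Generators

section PingPong

variable (R : Type*) [CommRing R] [LinearOrder R]

local notation "V" => nonzeroVectors SL(2, R) (Fin 2 → R)

def forwardRegion : Bool → Set V
  | true => {v | 0 ≤ v.1 0 * v.1 1 ∧ v.1 1 ^ 2 ≤ v.1 0 ^ 2}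
  | false => {v | 0 ≤ v.1 0 * v.1 1 ∧ v.1 0 ^ 2 < v.1 1 ^ 2}

def backwardRegion : Bool → Set V
  | true => {v | v.1 0 * v.1 1 < 0 ∧ v.1 1 ^ 2 < v.1 0 ^ 2}
  | false => {v | v.1 0 * v.1 1 < 0 ∧ v.1 0 ^ 2 ≤ v.1 1 ^ 2}

theorem forwardRegion_nonempty [IsStrictOrderedRing R] (b : Bool) :
    (forwardRegion R b).Nonempty := by
  cases b
  · exact ⟨⟨![0, 1], by simp⟩, by simp [forwardRegion]⟩
  · exact ⟨⟨![1, 0], by simp⟩, by simp [forwardRegion]⟩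

theorem pairwise_disjoint_forwardRegion : Pairwise (Disjoint on forwardRegion R) := by
  rintro (_ | _) (_ | _) hij <;> simp only [ne_eq, not_true_eq_false] at hij <;>
    exact Set.disjoint_left.2 fun v ⟨_, h₁⟩ ⟨_, h₂⟩ => by order

theorem pairwise_disjoint_backwardRegion : Pairwise (Disjoint on backwardRegion R) := by
  rintro (_ | _) (_ | _) hij <;> simp only [ne_eq, not_true_eq_false] at hij <;>
    exact Set.disjoint_left.2 fun v ⟨_, h₁⟩ ⟨_, h₂⟩ => by order

theorem disjoint_forwardRegion_backwardRegion (b c : Bool) :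
    Disjoint (forwardRegion R b) (backwardRegion R c) := by
  cases b <;> cases c <;>
    exact Set.disjoint_left.2 fun v ⟨h₁, _⟩ ⟨h₂, _⟩ => by order

variable [IsStrictOrderedRing R]

theorem generator_smul_compl_backwardRegion_subset (b : Bool) :
    generator R b • (backwardRegion R b)ᶜ ⊆ forwardRegion R b := by
  rintro _ ⟨v, hv, rfl⟩
  cases b
  all_goals
    simp only [backwardRegion, Set.mem_compl_iff, Set.mem_ofPred_eq, not_and_or, not_lt,
      not_le] at hv
    simp only [forwardRegion, Set.mem_ofPred_eq, SubMulAction.val_smul, generator_true_smul,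
      generator_false_smul, cons_val_zero, cons_val_one]
  · exact lowerShear_mapsTo (coord_ne_zero v) hv
  · exact upperShear_mapsTo hv

theorem generator_inv_smul_compl_forwardRegion_subset (b : Bool) :
    (generator R b)⁻¹ • (forwardRegion R b)ᶜ ⊆ backwardRegion R b := by
  rintro _ ⟨v, hv, rfl⟩
  cases b
  all_goals
    simp only [forwardRegion, Set.mem_compl_iff, Set.mem_ofPred_eq, not_and_or, not_lt,
      not_le] at hv
    simp only [backwardRegion, Set.mem_ofPred_eq, SubMulAction.val_smul, generator_true_inv_smul,
      generator_false_inv_smul, cons_val_zero, cons_val_one]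
  · exact lowerShear_inv_mapsTo (coord_ne_zero v) hv
  · exact upperShear_inv_mapsTo hv

end PingPong

-- `R : Type` because `FreeGroup.injective_lift_of_ping_pong` puts the group in the universe
-- of the index type `Bool`.
theorem injective_lift_generator (R : Type) [CommRing R] [LinearOrder R] [IsStrictOrderedRing R] :
    Injective (FreeGroup.lift (generator R)) :=
  FreeGroup.injective_lift_of_ping_pong _ (forwardRegion R) (backwardRegion R)
    (forwardRegion_nonempty R) (pairwise_disjoint_forwardRegion R)
    (pairwise_disjoint_backwardRegion R) (disjoint_forwardRegion_backwardRegion R)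
    (generator_smul_compl_backwardRegion_subset R)
    (generator_inv_smul_compl_forwardRegion_subset R)

end Sanov

/-- **Sanov's theorem.** The matrices `[[1,2],[0,1]]` and `[[1,0],[2,1]]` freely
generate a free subgroup of rank 2 of `SL₂(ℤ)`: the canonical homomorphism from the
free group on two generators sending the generators to these matrices is injective. -/
theorem sanov_free :
    Function.Injective (FreeGroup.lift
      (fun b : Bool =>
        if b then (⟨!![1, 2; 0, 1], by decide⟩ : Matrix.SpecialLinearGroup (Fin 2) ℤ)
        else ⟨!![1, 0; 2, 1], by decide⟩) :
      FreeGroup Bool →* Matrix.SpecialLinearGroup (Fin 2) ℤ) :=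
  Sanov.injective_lift_generator ℤ
end

section
/- Let X be a proper (i.e., locally compact and complete) metric space. Then on the group Isom(X) of bijective isometries of X, the compact-open topology coincides with the topology of pointwise convergence, and with this topology Isom(X) is a topological group acting continuously on X. -/
/-- The compact-open topology on the isometry group `Isom(X) = X ≃ᵢ X`. -/
noncomputable def isomCompactOpen (X : Type*) [MetricSpace X] :
    TopologicalSpace (X ≃ᵢ X) :=
  TopologicalSpace.induced
    (fun f : X ≃ᵢ X => (⟨f, f.continuous⟩ : C(X, X))) ContinuousMap.compactOpen

/-- The topology of pointwise convergence on the isometry group `Isom(X)`. -/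
def isomPointwise (X : Type*) [MetricSpace X] :
    TopologicalSpace (X ≃ᵢ X) :=
  TopologicalSpace.induced (fun f : X ≃ᵢ X => (f : X → X)) Pi.topologicalSpace

/-- The tautological action of `Isom(X)` on `X`. -/
instance isomSMul (X : Type*) [MetricSpace X] : SMul (X ≃ᵢ X) X :=
  ⟨fun f x => f x⟩

/-! Isometries are 1-Lipschitz, so `Isom(X)` is an equicontinuous family of maps, and on an
equicontinuous family pointwise convergence and compact convergence agree (Ascoli). For the
pointwise topology, equicontinuity also makes the evaluation `(f, x) ↦ f x` jointly continuous,
which gives continuity of the action and of composition; inversion is continuous because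
`d(f⁻¹ x, f₀⁻¹ x) = d(x, f (f₀⁻¹ x))`. -/

open Filter Topology

theorem Equicontinuous.continuous_uncurry {ι X α : Type*} [TopologicalSpace ι]
    [TopologicalSpace X] [UniformSpace α] {F : ι → X → α} (hF : Equicontinuous F)
    (hF_apply : ∀ x, Continuous fun i => F i x) :
    Continuous fun p : ι × X => F p.1 p.2 := by
  refine continuous_iff_continuousAt.2 fun ⟨i₀, x₀⟩ =>
    Uniform.continuousAt_iff'_right.2 fun U hU => ?_
  obtain ⟨V, hV, hVU⟩ := comp_mem_uniformity_sets hU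
  have near_i₀ : ∀ᶠ i in 𝓝 i₀, (F i₀ x₀, F i x₀) ∈ V :=
    Uniform.continuousAt_iff'_right.1 (hF_apply x₀).continuousAt hV
  have near_x₀ : ∀ᶠ x in 𝓝 x₀, ∀ i, (F i x₀, F i x) ∈ V := hF x₀ V hV
  rw [mem_map, nhds_prod_eq]
  filter_upwards [near_i₀.prod_mk near_x₀] with ⟨i, x⟩ ⟨hi, hx⟩
  exact hVU (SetRel.prodMk_mem_comp hi (hx i))

theorem Equicontinuous.induced_compactOpen_eq {ι X α : Type*} [TopologicalSpace X]
    [UniformSpace α] {F : ι → C(X, α)} (hF : Equicontinuous ((⇑) ∘ F)) :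
    TopologicalSpace.induced F ContinuousMap.compactOpen =
      TopologicalSpace.induced ((⇑) ∘ F) Pi.topologicalSpace := by
  let _ : TopologicalSpace ι := TopologicalSpace.induced ((⇑) ∘ F) Pi.topologicalSpace
  have compact_covers : ⋃₀ {K : Set X | IsCompact K} = Set.univ :=
    Set.eq_univ_of_forall fun x => ⟨{x}, isCompact_singleton, rfl⟩
  have inducing_uniformOnFun : IsInducing (ContinuousMap.toUniformOnFunIsCompact ∘ F) :=
    (EquicontinuousOn.isInducing_uniformOnFun_iff_pi compact_covers (fun _ hK => hK)
      fun K _ => hF.equicontinuousOn K).2 ⟨rfl⟩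
  calc TopologicalSpace.induced F ContinuousMap.compactOpen
      = TopologicalSpace.induced F (TopologicalSpace.induced
          ContinuousMap.toUniformOnFunIsCompact inferInstance) :=
        congrArg _ ContinuousMap.isUniformEmbedding_toUniformOnFunIsCompact.isInducing.eq_induced
    _ = _ := induced_compose.trans inducing_uniformOnFun.eq_induced.symm

theorem IsometryEquiv.equicontinuous_coeFn (X : Type*) [PseudoEMetricSpace X] :
    Equicontinuous fun f : X ≃ᵢ X => (f : X → X) :=
  (LipschitzWith.uniformEquicontinuous _ 1 fun f => f.isometry.lipschitz).equicontinuous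

theorem isomCompactOpen_eq_isomPointwise (X : Type*) [MetricSpace X] :
    isomCompactOpen X = isomPointwise X :=
  Equicontinuous.induced_compactOpen_eq (IsometryEquiv.equicontinuous_coeFn X)

section PointwiseTopology

variable (X : Type*) [MetricSpace X]

attribute [local instance] isomPointwise

theorem isomPointwise_continuous_eval :
    Continuous fun p : (X ≃ᵢ X) × X => p.1 p.2 :=
  (IsometryEquiv.equicontinuous_coeFn X).continuous_uncurry fun x =>
    (continuous_apply x).comp continuous_induced_dom

theorem isomPointwise_continuous_inv : Continuous fun f : X ≃ᵢ X => f⁻¹ := by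
  refine continuous_induced_rng.2 <| continuous_pi fun x =>
    continuous_iff_continuousAt.2 fun f₀ => tendsto_iff_dist_tendsto_zero.2 ?_
  have dist_inv_eq (f : X ≃ᵢ X) : dist (f⁻¹ x) (f₀⁻¹ x) = dist x (f (f₀⁻¹ x)) := by
    rw [← f.dist_eq, IsometryEquiv.apply_inv_self]
  have continuous_dist_apply : Continuous fun f : X ≃ᵢ X => dist x (f (f₀⁻¹ x)) :=
    continuous_const.dist ((continuous_apply _).comp continuous_induced_dom)
  simpa only [Function.comp_apply, dist_inv_eq, IsometryEquiv.apply_inv_self, dist_self]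
    using continuous_dist_apply.tendsto f₀

theorem isomPointwise_isTopologicalGroup : IsTopologicalGroup (X ≃ᵢ X) where
  continuous_mul := continuous_induced_rng.2 <| continuous_pi fun _ =>
    (isomPointwise_continuous_eval X).comp <| continuous_fst.prodMk <|
      (isomPointwise_continuous_eval X).comp <| continuous_snd.prodMk continuous_const
  continuous_inv := isomPointwise_continuous_inv X

theorem isomPointwise_continuousSMul : ContinuousSMul (X ≃ᵢ X) X :=
  ⟨isomPointwise_continuous_eval X⟩

end PointwiseTopology

theorem isom_compactOpen_eq_pointwise_general (X : Type*) [MetricSpace X] :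
    isomCompactOpen X = isomPointwise X ∧
      @IsTopologicalGroup (X ≃ᵢ X) (isomCompactOpen X) _ ∧
      @ContinuousSMul (X ≃ᵢ X) X _ (isomCompactOpen X) _ := by
  rw [isomCompactOpen_eq_isomPointwise]
  exact ⟨rfl, isomPointwise_isTopologicalGroup X, isomPointwise_continuousSMul X⟩

/-- For a proper metric space `X`, the compact-open topology on `Isom(X)` coincides
with the topology of pointwise convergence, and with this topology `Isom(X)` is a
topological group acting continuously on `X`. -/
theorem isom_compactOpen_eq_pointwise (X : Type*) [MetricSpace X] [ProperSpace X] :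
    isomCompactOpen X = isomPointwise X ∧
      @IsTopologicalGroup (X ≃ᵢ X) (isomCompactOpen X) _ ∧
      @ContinuousSMul (X ≃ᵢ X) X _ (isomCompactOpen X) _ :=
  isom_compactOpen_eq_pointwise_general X
end
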